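/- Suppose the ADMM optimality conditions hold at step k: (i) for all z ∈ Z, θ1(z) − θ1(z^{k+1}) + ⟨z − z^{k+1}, λ^k − β(Dx^k − z^{k+1})⟩ ≥ 0; (ii) for all x ∈ X, θ2(x) − θ2(x^{k+1}) + ⟨x − x^{k+1}, −Dᵀλ^k + βDᵀ(Dx^{k+1} − z^{k+1})⟩ ≥ 0; (iii) λ^{k+1} = λ^k − β(Dx^{k+1} − z^{k+1}); and additionally (iv) for all x ∈ X, θ2(x) − θ2(x^k) + ⟨x − x^k, −Dᵀλ^k⟩ ≥ 0. Suppose also (z*, x*, λ*) ∈ Z × X × R^n satisfies the saddle-point conditions: for all z ∈ Z, θ1(z) − θ1(z*) + ⟨z − z*, λ*⟩ ≥ 0; for all x ∈ X, θ2(x) − θ2(x*) + ⟨x − x*, −Dᵀλ*⟩ ≥ 0; and Dx* = z*. Then (1/β)‖λ^{k+1} − λ*‖₂² + β‖Dx^{k+1} − z*‖₂² ≤ (1/β)‖λ^k − λ*‖₂² + β‖Dx^k − z*‖₂² − [(1/β)‖λ^k − λ^{k+1}‖₂² + β‖Dx^k − Dx^{k+1}‖₂²]. -/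

import Mathlib

open scoped RealInnerProductSpace

/-- Matrix-vector multiplication, landing in Euclidean space. -/
noncomputable def mulv {n d : ℕ} (A : Matrix (Fin n) (Fin d) ℝ)
    (x : EuclideanSpace ℝ (Fin d)) : EuclideanSpace ℝ (Fin n) := WithLp.toLp 2 (A.mulVec x)

/-- `θ₁(z) = ‖z‖₁`, the sum of absolute values of the entries of `z`. -/
noncomputable def theta1 {n : ℕ} (z : EuclideanSpace ℝ (Fin n)) : ℝ := ∑ i, |z i|

/-- `θ₂(x) = (α/2)‖y − Mx‖₂²`. -/
noncomputable def theta2 {m d : ℕ} (M : Matrix (Fin m) (Fin d) ℝ)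
    (y : EuclideanSpace ℝ (Fin m)) (α : ℝ) (x : EuclideanSpace ℝ (Fin d)) : ℝ :=
  α / 2 * ‖y - mulv M x‖ ^ 2

lemma mulv_sub {n d : ℕ} (A : Matrix (Fin n) (Fin d) ℝ) (x y : EuclideanSpace ℝ (Fin d)) :
    mulv A (x - y) = mulv A x - mulv A y := by
  ext i; simp [mulv, Matrix.mulVec_sub]

lemma inner_mulv_transpose {n d : ℕ} (A : Matrix (Fin n) (Fin d) ℝ)
    (u : EuclideanSpace ℝ (Fin d)) (w : EuclideanSpace ℝ (Fin n)) :
    ⟪u, mulv A.transpose w⟫ = ⟪mulv A u, w⟫ := by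
  simp only [mulv, PiLp.inner_apply, RCLike.inner_apply, conj_trivial,
    PiLp.toLp_apply, Matrix.mulVec, dotProduct, Matrix.transpose_apply, Finset.mul_sum, Finset.sum_mul]
  rw [Finset.sum_comm]
  apply Finset.sum_congr rfl; intros; apply Finset.sum_congr rfl; intros; ring

/-- One-step contraction inequality of ADMM toward a saddle point. -/
theorem stmt_8 {n d m : ℕ} (D : Matrix (Fin n) (Fin d) ℝ) (M : Matrix (Fin m) (Fin d) ℝ)
    (y : EuclideanSpace ℝ (Fin m)) (α β : ℝ) (hα : 0 < α) (hβ : 0 < β)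
    (Z : Set (EuclideanSpace ℝ (Fin n))) (X : Set (EuclideanSpace ℝ (Fin d)))
    (hZ : Convex ℝ Z) (hX : Convex ℝ X)
    (zk zk1 : EuclideanSpace ℝ (Fin n)) (xk xk1 : EuclideanSpace ℝ (Fin d))
    (lk lk1 : EuclideanSpace ℝ (Fin n))
    (hzkZ : zk ∈ Z) (hzk1Z : zk1 ∈ Z) (hxkX : xk ∈ X) (hxk1X : xk1 ∈ X)
    (h1 : ∀ z ∈ Z, theta1 z - theta1 zk1 +
      ⟪z - zk1, lk - β • (mulv D xk - zk1)⟫ ≥ 0)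
    (h2 : ∀ x ∈ X, theta2 M y α x - theta2 M y α xk1 +
      ⟪x - xk1, -(mulv D.transpose lk) + β • mulv D.transpose (mulv D xk1 - zk1)⟫ ≥ 0)
    (h3 : lk1 = lk - β • (mulv D xk1 - zk1))
    (h4 : ∀ x ∈ X, theta2 M y α x - theta2 M y α xk +
      ⟪x - xk, -(mulv D.transpose lk)⟫ ≥ 0)
    (zs : EuclideanSpace ℝ (Fin n)) (xs : EuclideanSpace ℝ (Fin d))
    (ls : EuclideanSpace ℝ (Fin n)) (hzs : zs ∈ Z) (hxs : xs ∈ X)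
    (hs1 : ∀ z ∈ Z, theta1 z - theta1 zs + ⟪z - zs, ls⟫ ≥ 0)
    (hs2 : ∀ x ∈ X, theta2 M y α x - theta2 M y α xs + ⟪x - xs, -(mulv D.transpose ls)⟫ ≥ 0)
    (hs3 : mulv D xs = zs) :
    (1 / β) * ‖lk1 - ls‖ ^ 2 + β * ‖mulv D xk1 - zs‖ ^ 2 ≤
      (1 / β) * ‖lk - ls‖ ^ 2 + β * ‖mulv D xk - zs‖ ^ 2 -
        ((1 / β) * ‖lk - lk1‖ ^ 2 + β * ‖mulv D xk - mulv D xk1‖ ^ 2) := by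
  have hβ' : β ≠ 0 := ne_of_gt hβ
  set p := mulv D xk1 with hp
  set q := mulv D xk with hq
  -- lk - lk1 = β • (p - zk1)
  have hlk : lk - lk1 = β • (p - zk1) := by rw [h3]; abel
  -- F1 : ⟪zs - zk1, lk1 - ls⟫ ≥ β * ⟪zs - zk1, q - p⟫
  have hv : lk - β • (q - zk1) = (lk1 - ls) - β • (q - p) + ls := by
    rw [h3]; module
  have F1 : ⟪zs - zk1, lk1 - ls⟫ - β * ⟪zs - zk1, q - p⟫ ≥ 0 := by
    have a1 := h1 zs hzs
    have a2 := hs1 zk1 hzk1Z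
    rw [hv] at a1
    rw [inner_add_right, inner_sub_right, real_inner_smul_right] at a1
    have e3 : ⟪zk1 - zs, ls⟫ = -⟪zs - zk1, ls⟫ := by
      rw [← inner_neg_left]; congr 1; abel
    rw [e3] at a2
    linarith
  -- F2 : ⟪zs - p, ls - lk1⟫ ≥ 0
  have F2 : ⟪zs - p, ls - lk1⟫ ≥ 0 := by
    have a1 := h2 xs hxs
    have a2 := hs2 xk1 hxk1X
    rw [inner_add_right, inner_neg_right, real_inner_smul_right,
      inner_mulv_transpose, inner_mulv_transpose, mulv_sub, hs3] at a1
    rw [inner_neg_right, inner_mulv_transpose, mulv_sub, hs3] at a2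
    -- a1 : θ2 xs - θ2 xk1 + (-⟪zs - p, lk⟫ + β * ⟪zs - p, p - zk1⟫) ≥ 0
    -- a2 : θ2 xk1 - θ2 xs + -⟪p - zs, ls⟫ ≥ 0
    have e1 : ⟪zs - p, ls - lk1⟫ =
        (-⟪zs - p, lk⟫ + β * ⟪zs - p, p - zk1⟫) + (-⟪p - zs, ls⟫) := by
      rw [h3]
      have : ⟪p - zs, ls⟫ = -⟪zs - p, ls⟫ := by
        rw [← inner_neg_left]; congr 1; abel
      rw [this, inner_sub_right, inner_sub_right, real_inner_smul_right]
      ring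
    rw [e1]
    linarith
  -- F3 : ⟪q - p, p - zk1⟫ ≥ 0
  have F3 : ⟪q - p, p - zk1⟫ ≥ 0 := by
    have a1 := h2 xk hxkX
    have a2 := h4 xk1 hxk1X
    rw [inner_add_right, inner_neg_right, real_inner_smul_right,
      inner_mulv_transpose, inner_mulv_transpose, mulv_sub] at a1
    rw [inner_neg_right, inner_mulv_transpose, mulv_sub] at a2
    have e1 : ⟪p - q, lk⟫ = -⟪q - p, lk⟫ := by
      rw [← inner_neg_left]; congr 1; abel
    rw [e1] at a2
    nlinarith [a1, a2]
  -- main scalar inequality: S1 + β * S2 ≥ 0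
  have G1 : ⟪p - zk1, lk1 - ls⟫ = ⟪zs - zk1, lk1 - ls⟫ + ⟪zs - p, ls - lk1⟫ := by
    have : (p : EuclideanSpace ℝ (Fin n)) - zk1 = (zs - zk1) - (zs - p) := by abel
    rw [this, inner_sub_left]
    have : ⟪zs - p, ls - lk1⟫ = -⟪zs - p, lk1 - ls⟫ := by
      rw [← inner_neg_right]; congr 1; abel
    rw [this]; ring
  have G2 : ⟪q - p, p - zs⟫ = ⟪q - p, p - zk1⟫ - ⟪zs - zk1, q - p⟫ := by
    have e : (p : EuclideanSpace ℝ (Fin n)) - zs = (p - zk1) - (zs - zk1) := by abel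
    rw [e, inner_sub_right, real_inner_comm (zs - zk1) (q - p)]
  have main : ⟪p - zk1, lk1 - ls⟫ + β * ⟪q - p, p - zs⟫ ≥ 0 := by
    rw [G1, G2]
    have := mul_nonneg hβ.le F3
    nlinarith [F1, F2]
  -- norm identities
  have key : ∀ a b : EuclideanSpace ℝ (Fin n), ‖a + b‖^2 - ‖a‖^2 - ‖b‖^2 = 2*⟪a,b⟫ := by
    intro a b; rw [norm_add_sq_real]; ring
  have k1 := key (lk - lk1) (lk1 - ls)
  have k2 := key (q - p) (p - zs)
  rw [show (lk - lk1) + (lk1 - ls) = lk - ls by abel] at k1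
  rw [show (q - p) + (p - zs) = q - zs by abel] at k2
  have S1eq : ⟪lk - lk1, lk1 - ls⟫ = β * ⟪p - zk1, lk1 - ls⟫ := by
    rw [hlk, real_inner_smul_left]
  rw [S1eq] at k1
  have mainβ : 0 ≤ β * (⟪p - zk1, lk1 - ls⟫ + β * ⟪q - p, p - zs⟫) := mul_nonneg hβ.le main
  rw [← sub_nonneg] at mainβ ⊢
  have hfield : (1 / β) * ‖lk - ls‖ ^ 2 + β * ‖q - zs‖ ^ 2 -
        ((1 / β) * ‖lk - lk1‖ ^ 2 + β * ‖q - p‖ ^ 2) -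
        ((1 / β) * ‖lk1 - ls‖ ^ 2 + β * ‖p - zs‖ ^ 2) =
      (1 / β) * (‖lk - ls‖ ^ 2 - ‖lk - lk1‖ ^ 2 - ‖lk1 - ls‖ ^ 2) +
      β * (‖q - zs‖ ^ 2 - ‖q - p‖ ^ 2 - ‖p - zs‖ ^ 2) := by ring
  rw [hfield, k1, k2]
  have hcancel : (1 / β) * (2 * (β * ⟪p - zk1, lk1 - ls⟫)) = 2 * ⟪p - zk1, lk1 - ls⟫ := by
    field_simp
  rw [hcancel]
  linarith [main]
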